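/- Fix a positive integer n with q = ⌊n/3⌋, fix σ ∈ {±1}^n, and set h = max(h(σ), h(−σ)). Then ν_max(σ) ≥ min{q, ⌊(n−h)/2⌋}; that is, there exists a seating order producing at least min{q, ⌊(n−h)/2⌋} napkinless diners. -/

import Mathlib

namespace Napkin

variable {n q : ℕ}

/-- The napkin to the left of seat `s`; napkin `s` itself is the one to the right of
seat `s`, placed between seats `s` and `s + 1` around the circular table. -/
def leftNapkin (s : Fin n) : Fin n := ⟨((s : ℕ) + (n - 1)) % n, Nat.mod_lt _ s.pos⟩

/-- Process the diners `0, 1, …, n-1` in their arrival order.  Here `w i = j` means that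
diner `j` sits in seat `i` (so diner `j` sits in seat `w.symm j`), and `σ j = true`
means diner `j` prefers the napkin to their right.  Each diner takes their preferred
adjacent napkin if it is unclaimed, otherwise the other adjacent napkin if it is
unclaimed, and otherwise is napkinless.  The returned state consists of the set of
claimed napkins and the set of napkinless diners. -/
def dine (σ : Fin n → Bool) (w : Equiv.Perm (Fin n)) :
    Finset (Fin n) × Finset (Fin n) :=
  (List.finRange n).foldl
    (fun st j =>
      let s := w.symm j
      let pref := if σ j then s else leftNapkin s
      let other := if σ j then leftNapkin s else s
      if pref ∉ st.1 then (insert pref st.1, st.2)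
      else if other ∉ st.1 then (insert other st.1, st.2)
      else (st.1, insert j st.2))
    (∅, ∅)

/-- The set of napkinless diners for the seating arrangement `(w, σ)`. -/
def napkinless (σ : Fin n → Bool) (w : Equiv.Perm (Fin n)) : Finset (Fin n) :=
  (dine σ w).2

/-- `ν(w,σ)`, the number of napkinless diners. -/
def nu (σ : Fin n → Bool) (w : Equiv.Perm (Fin n)) : ℕ := (napkinless σ w).card

/-- A seating order puts diner `1` in seat `1` (index `0` here). -/
def IsSeating (w : Equiv.Perm (Fin n)) : Prop :=
  ∀ i : Fin n, (i : ℕ) = 0 → (w i : ℕ) = 0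

instance : DecidablePred (IsSeating (n := n)) := fun w =>
  decidable_of_iff (∀ i : Fin n, (i : ℕ) = 0 → (w i : ℕ) = 0) Iff.rfl

/-- `ν_max(σ)`, the maximal number of napkinless diners over all seating orders. -/
def nuMax (σ : Fin n → Bool) : ℕ :=
  (Finset.univ.filter fun w : Equiv.Perm (Fin n) => IsSeating w).sup (nu σ)

/-- The value `±1` of a napkin preference. -/
def sign (b : Bool) : ℤ := if b then 1 else -1

/-- The drift `h(σ) = max(0, max over prefixes of σ₁ + ⋯ + σᵢ)`. -/
def drift (σ : Fin n → Bool) : ℕ :=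
  (Finset.range (n + 1)).sup fun i =>
    (∑ j ∈ Finset.univ.filter (fun j : Fin n => (j : ℕ) < i), sign (σ j)).toNat

/-- A bench collection: `q` pairwise disjoint triples `aᵢ < bᵢ < cᵢ` in `{1,…,n}`. -/
structure BenchCollection (n q : ℕ) where
  a : Fin q → Fin n
  b : Fin q → Fin n
  c : Fin q → Fin n
  hab : ∀ i, a i < b i
  hbc : ∀ i, b i < c i
  disj : ∀ i j : Fin q, i ≠ j →
    Disjoint ({a i, b i, c i} : Finset (Fin n)) ({a j, b j, c j} : Finset (Fin n))

/-- A bench is balanced when its two smallest members have opposite preferences. -/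
def Balanced (σ : Fin n → Bool) (β : BenchCollection n q) (i : Fin q) : Prop :=
  sign (σ (β.a i)) + sign (σ (β.b i)) = 0

instance (σ : Fin n → Bool) (β : BenchCollection n q) :
    DecidablePred (Balanced σ β) := fun i =>
  decidable_of_iff (sign (σ (β.a i)) + sign (σ (β.b i)) = 0) Iff.rfl

/-- `b(β,σ)`, the number of balanced benches of `β`. -/
def balance (σ : Fin n → Bool) (β : BenchCollection n q) : ℕ :=
  (Finset.univ.filter fun i => Balanced σ β i).card

/-!
Put `K = min q ⌊(n - h) / 2⌋`. Seat the `p`-th right-preferring diner `aₚ`, a diner `cₚ` and the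
`p`-th left-preferring diner `bₚ` (`p < K`) on three consecutive seats. If `aₚ` and `bₚ` arrive
before `cₚ`, they take the two napkins next to `cₚ`, who is left napkinless. For the `cₚ` take, in
order, the last `K` diners outside the two groups; they do arrive late enough: if fewer than `p + 1`
left-preferring diners came before `cₚ`, the first `cₚ + 1` diners would contain at least
`n - 2K + 1` more right- than left-preferring ones, whereas `h ≤ n - 2K`. Rotating the table finally
puts the first diner in the first seat.
-/

section Dining

variable {σ : Fin n → Bool} {w : Equiv.Perm (Fin n)}

lemma leftNapkin_eq_sub_one [NeZero n] (s : Fin n) : leftNapkin s = s - 1 := by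
  apply Fin.ext
  rw [Fin.val_sub, Fin.val_one', add_comm]
  show ((s : ℕ) + (n - 1)) % n = _
  rcases Nat.lt_or_ge n 2 with hn | hn
  · obtain rfl : n = 1 := by have := NeZero.pos n; omega
    simp
  · rw [Nat.mod_eq_of_lt hn]

variable (σ w) in
def dineStep (st : Finset (Fin n) × Finset (Fin n)) (j : Fin n) :
    Finset (Fin n) × Finset (Fin n) :=
  let s := w.symm j
  let pref := if σ j then s else leftNapkin s
  let other := if σ j then leftNapkin s else s
  if pref ∉ st.1 then (insert pref st.1, st.2)
  else if other ∉ st.1 then (insert other st.1, st.2)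
  else (st.1, insert j st.2)

lemma dine_eq_foldl : dine σ w = (List.finRange n).foldl (dineStep σ w) (∅, ∅) := rfl

lemma le_dineStep (st : Finset (Fin n) × Finset (Fin n)) (j : Fin n) :
    st ≤ dineStep σ w st j := by
  unfold dineStep
  dsimp only
  split_ifs <;> simp [Prod.le_def]

lemma le_foldl_dineStep (l : List (Fin n)) (st : Finset (Fin n) × Finset (Fin n)) :
    st ≤ l.foldl (dineStep σ w) st := by
  induction l generalizing st with
  | nil => exact le_rfl
  | cons j l ih => exact (le_dineStep st j).trans (ih _)

lemma pref_mem_foldl_dineStep {l : List (Fin n)} {j : Fin n} (hj : j ∈ l)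
    (st : Finset (Fin n) × Finset (Fin n)) :
    (if σ j then w.symm j else leftNapkin (w.symm j)) ∈ (l.foldl (dineStep σ w) st).1 := by
  induction l generalizing st with
  | nil => simp at hj
  | cons a l ih =>
    rw [List.foldl_cons]
    obtain rfl | hj := List.mem_cons.mp hj
    · refine (le_foldl_dineStep l _).1 ?_
      unfold dineStep
      dsimp only
      split_ifs <;> simp_all
    · exact ih hj _

lemma mem_foldl_dineStep_of_napkins_mem (l : List (Fin n))
    {st : Finset (Fin n) × Finset (Fin n)} {j : Fin n} (hr : w.symm j ∈ st.1)
    (hl : leftNapkin (w.symm j) ∈ st.1) :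
    j ∈ (l.foldl (dineStep σ w) (dineStep σ w st j)).2 := by
  refine (le_foldl_dineStep l _).2 ?_
  unfold dineStep
  dsimp only
  split_ifs <;> simp_all

lemma exists_finRange_eq_append (x : Fin n) :
    ∃ s t, List.finRange n = s ++ x :: t ∧ ∀ a < x, a ∈ s := by
  obtain ⟨s, t, hst⟩ := List.append_of_mem (List.mem_finRange x)
  refine ⟨s, t, hst, fun a hax => ?_⟩
  have hsorted := List.pairwise_lt_finRange n
  have ha := List.mem_finRange a
  rw [hst] at hsorted ha
  rw [List.pairwise_append, List.pairwise_cons] at hsorted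
  rcases List.mem_append.mp ha with ha | ha
  · exact ha
  · rcases List.mem_cons.mp ha with rfl | ha
    · exact absurd hax (lt_irrefl a)
    · exact absurd (hsorted.2.1.1 a ha) (lt_asymm hax)

lemma mem_napkinless_of_between [NeZero n] {a b x : Fin n} (ha : σ a = true)
    (hb : σ b = false) (hax : a < x) (hbx : b < x) (hseat_a : w.symm x = w.symm a + 1)
    (hseat_b : w.symm b = w.symm x + 1) :
    x ∈ napkinless σ w := by
  obtain ⟨s, t, hst, hs⟩ := exists_finRange_eq_append x
  have hright := pref_mem_foldl_dineStep (σ := σ) (w := w) (hs b hbx) (∅, ∅)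
  have hleft := pref_mem_foldl_dineStep (σ := σ) (w := w) (hs a hax) (∅, ∅)
  rw [hb, if_neg Bool.false_ne_true, leftNapkin_eq_sub_one, hseat_b, add_sub_cancel_right]
    at hright
  rw [ha, if_pos rfl] at hleft
  rw [napkinless, dine_eq_foldl, hst, List.foldl_append, List.foldl_cons]
  refine mem_foldl_dineStep_of_napkins_mem t hright ?_
  rwa [leftNapkin_eq_sub_one, hseat_a, add_sub_cancel_right]

end Dining

section Benches

open Nat

lemma exists_lt_count_eq {p : ℕ → Prop} [DecidablePred p] {k x : ℕ} (h : k < count p x) :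
    ∃ a < x, p a ∧ count p a = k := by
  have hcard : ∀ hf : (Set.ofPred p).Finite, k < hf.toFinset.card :=
    fun hf => h.trans_le (count_le_card hf x)
  exact ⟨nth p k, nth_lt_of_lt_count h, nth_mem k hcard, count_nth hcard⟩

variable (τ : ℕ → Bool) (K : ℕ)

lemma count_true_add_count_false (i : ℕ) : count (τ · = true) i + count (τ · = false) i = i := by
  induction i with
  | zero => simp
  | succ i ih => cases h : τ i <;> simp [count_succ, h] <;> omega

def IsSpare (j : ℕ) : Prop :=
  ¬(τ j = true ∧ count (τ · = true) j < K) ∧ ¬(τ j = false ∧ count (τ · = false) j < K)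

instance : DecidablePred (IsSpare τ K) := fun _ => by unfold IsSpare; infer_instance

lemma count_isSpare (i : ℕ) :
    count (IsSpare τ K) i = (count (τ · = true) i - K) + (count (τ · = false) i - K) := by
  induction i with
  | zero => simp
  | succ i ih => cases h : τ i <;> simp [count_succ, IsSpare, h] <;> split_ifs <;> omega

/-- Bench `p < K` occupies seats `3p, 3p+1, 3p+2`, holding the `p`-th right-preferring diner,
the `(n - 3K + p)`-th spare diner and the `p`-th left-preferring diner (counting from `0`); the
first `n - 3K` spare diners fill seats `3K, …, n-1`. -/
def benchSeat (n x : ℕ) : ℕ :=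
  if τ x = true ∧ count (τ · = true) x < K then 3 * count (τ · = true) x
  else if τ x = false ∧ count (τ · = false) x < K then 3 * count (τ · = false) x + 2
  else if count (IsSpare τ K) x < n - 3 * K then 3 * K + count (IsSpare τ K) x
  else 3 * (count (IsSpare τ K) x - (n - 3 * K)) + 1

variable {τ K} {n : ℕ}

lemma benchSeat_lt (h3K : 3 * K ≤ n) (hS : count (IsSpare τ K) n ≤ n - 2 * K) {x : ℕ}
    (hx : x < n) : benchSeat τ K n x < n := by
  unfold benchSeat
  split_ifs with h₁ h₂ h₃
  · omega
  · omega
  · omega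
  · have := count_strict_mono (p := IsSpare τ K) ⟨h₁, h₂⟩ hx
    omega

lemma benchSeat_injOn (h3K : 3 * K ≤ n) (hS : count (IsSpare τ K) n ≤ n - 2 * K) {x y : ℕ}
    (hx : x < n) (hy : y < n) (hxy : benchSeat τ K n x = benchSeat τ K n y) : x = y := by
  unfold benchSeat at hxy
  split_ifs at hxy <;> try omega
  · exact count_injective (p := (τ · = true)) ‹τ x = true ∧ _›.1 ‹τ y = true ∧ _›.1
      (by omega)
  · exact count_injective (p := (τ · = false)) ‹τ x = false ∧ _›.1 ‹τ y = false ∧ _›.1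
      (by omega)
  · exact count_injective (p := IsSpare τ K) ⟨‹¬(τ x = true ∧ _)›, ‹¬(τ x = false ∧ _)›⟩
      ⟨‹¬(τ y = true ∧ _)›, ‹¬(τ y = false ∧ _)›⟩ (by omega)
  · have := count_strict_mono (p := IsSpare τ K)
      ⟨‹¬(τ y = true ∧ _)›, ‹¬(τ y = false ∧ _)›⟩ hy
    omega
  · have := count_strict_mono (p := IsSpare τ K)
      ⟨‹¬(τ x = true ∧ _)›, ‹¬(τ x = false ∧ _)›⟩ hx
    omega
  · exact count_injective (p := IsSpare τ K) ⟨‹¬(τ x = true ∧ _)›, ‹¬(τ x = false ∧ _)›⟩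
      ⟨‹¬(τ y = true ∧ _)›, ‹¬(τ y = false ∧ _)›⟩ (by omega)

lemma isSpare_of_benchSeat_eq {p x : ℕ} (hp : p < K) (hseat : benchSeat τ K n x = 3 * p + 1) :
    IsSpare τ K x ∧ count (IsSpare τ K) x = n - 3 * K + p := by
  unfold benchSeat at hseat
  split_ifs at hseat with h₁ h₂ h₃ <;> first | omega | exact ⟨⟨h₁, h₂⟩, by omega⟩

lemma lt_count_of_isSpare {h x p : ℕ}
    (hdrift : count (τ · = true) (x + 1) ≤ count (τ · = false) (x + 1) + h ∧
      count (τ · = false) (x + 1) ≤ count (τ · = true) (x + 1) + h)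
    (h2K : 2 * K ≤ n - h) (hp : p < K) (hspare : IsSpare τ K x)
    (hcount : count (IsSpare τ K) x = n - 3 * K + p) :
    p < count (τ · = true) x ∧ p < count (τ · = false) x := by
  have hsucc := count_isSpare τ K (x + 1)
  have hx := count_isSpare τ K x
  rw [count_succ, if_pos hspare] at hsucc
  simp only [count_succ] at hsucc hdrift
  unfold IsSpare at hspare
  cases hτ : τ x <;> simp [hτ] at hsucc hdrift hspare <;> omega

lemma exists_earlier_benchmates {h x p : ℕ}
    (hdrift : ∀ i ≤ n, count (τ · = true) i ≤ count (τ · = false) i + h ∧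
      count (τ · = false) i ≤ count (τ · = true) i + h)
    (h2K : 2 * K ≤ n - h) (hp : p < K) (hx : x < n) (hseat : benchSeat τ K n x = 3 * p + 1) :
    ∃ a < x, ∃ b < x, τ a = true ∧ τ b = false ∧
      benchSeat τ K n a = 3 * p ∧ benchSeat τ K n b = 3 * p + 2 := by
  obtain ⟨hspare, hcount⟩ := isSpare_of_benchSeat_eq hp hseat
  obtain ⟨hpT, hpF⟩ := lt_count_of_isSpare (hdrift (x + 1) hx) h2K hp hspare hcount
  obtain ⟨a, hax, ha, hca⟩ := exists_lt_count_eq hpT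
  obtain ⟨b, hbx, hb, hcb⟩ := exists_lt_count_eq hpF
  refine ⟨a, hax, b, hbx, ha, hb, ?_, ?_⟩
  · simp [benchSeat, ha, hca, hp]
  · simp [benchSeat, hb, hcb, hp]

end Benches

section Drift

open Nat

variable {σ : Fin n → Bool}

def prefAt (σ : Fin n → Bool) (j : ℕ) : Bool := if h : j < n then σ ⟨j, h⟩ else false

@[simp] lemma prefAt_val (x : Fin n) : prefAt σ x = σ x := by simp [prefAt]

lemma sum_sign_eq_count {i : ℕ} (hi : i ≤ n) :
    ∑ j ∈ Finset.univ.filter (fun j : Fin n => (j : ℕ) < i), sign (σ j) =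
      (count (prefAt σ · = true) i : ℤ) - count (prefAt σ · = false) i := by
  induction i with
  | zero => simp
  | succ i ih =>
    have hi' : i < n := hi
    have hfilter : Finset.univ.filter (fun j : Fin n => (j : ℕ) < i + 1) =
        insert ⟨i, hi'⟩ (Finset.univ.filter fun j : Fin n => (j : ℕ) < i) := by
      ext j
      simp [Fin.ext_iff]
      omega
    rw [hfilter, Finset.sum_insert (by simp), ih hi'.le, count_succ, count_succ]
    cases h : σ ⟨i, hi'⟩ <;> simp [prefAt, hi', h, sign] <;> ring

lemma count_le_count_add_drift {i : ℕ} (hi : i ≤ n) :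
    count (prefAt σ · = true) i ≤ count (prefAt σ · = false) i + drift σ ∧
      count (prefAt σ · = false) i ≤ count (prefAt σ · = true) i + drift (fun j => !σ j) := by
  have hmem : i ∈ Finset.range (n + 1) := Finset.mem_range.mpr (by omega)
  have hσ : (∑ j ∈ Finset.univ.filter (fun j : Fin n => (j : ℕ) < i), sign (σ j)).toNat ≤
      drift σ :=
    Finset.le_sup (f := fun i => (∑ j ∈ Finset.univ.filter (fun j : Fin n => (j : ℕ) < i),
      sign (σ j)).toNat) hmem
  have hnotσ : (∑ j ∈ Finset.univ.filter (fun j : Fin n => (j : ℕ) < i), sign (!σ j)).toNat ≤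
      drift (fun j => !σ j) :=
    Finset.le_sup (f := fun i => (∑ j ∈ Finset.univ.filter (fun j : Fin n => (j : ℕ) < i),
      sign (!σ j)).toNat) hmem
  have hsign : ∀ b : Bool, sign (!b) = -sign b := by decide
  simp only [hsign, Finset.sum_neg_distrib, sum_sign_eq_count hi] at hσ hnotσ
  omega

end Drift

lemma eq_add_one_of_val_eq [NeZero n] {a b : Fin n} (h : (b : ℕ) = a + 1) : b = a + 1 := by
  ext
  rw [Fin.val_add, Fin.val_one', h]
  have : 1 < n := by omega
  rw [Nat.mod_eq_of_lt this, Nat.mod_eq_of_lt (h ▸ b.isLt)]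

lemma exists_seating_of_benches [NeZero n] {σ : Fin n → Bool} {K : ℕ} (e : Fin n ≃ Fin n)
    (c : Fin K → Fin n) (hc : Function.Injective c)
    (hbench : ∀ p, ∃ a b, σ a = true ∧ σ b = false ∧ a < c p ∧ b < c p ∧
      e (c p) = e a + 1 ∧ e b = e (c p) + 1) :
    ∃ w : Equiv.Perm (Fin n), IsSeating w ∧ K ≤ nu σ w := by
  -- rotating the table puts diner `0` in seat `0` and keeps neighbours adjacent
  let e' := e.trans (Equiv.subRight (e 0))
  refine ⟨e'.symm, fun i hi => ?_, ?_⟩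
  · obtain rfl : i = 0 := Fin.ext hi
    have h0 : e'.symm 0 = 0 := e'.symm_apply_eq.mpr (by simp [e'])
    rw [h0, Fin.val_zero]
  · have hmem : ∀ p, c p ∈ napkinless σ e'.symm := fun p => by
      obtain ⟨a, b, ha, hb, hap, hbp, hseat_a, hseat_b⟩ := hbench p
      refine mem_napkinless_of_between ha hb hap hbp ?_ ?_ <;>
        simp only [Equiv.symm_symm, e', Equiv.trans_apply, Equiv.subRight_apply, hseat_a,
          hseat_b, add_sub_right_comm]
    calc K = (Finset.univ.image c).card := by simp [Finset.card_image_of_injective _ hc]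
      _ ≤ nu σ e'.symm := Finset.card_le_card fun x hx => by
        obtain ⟨p, -, rfl⟩ := Finset.mem_image.mp hx
        exact hmem p

lemma exists_seating_of_drift_le [NeZero n] {σ : Fin n → Bool} {K h : ℕ} (h3K : 3 * K ≤ n)
    (h2K : 2 * K ≤ n - h) (hσ : drift σ ≤ h) (hnotσ : drift (fun j => !σ j) ≤ h) :
    ∃ w : Equiv.Perm (Fin n), IsSeating w ∧ K ≤ nu σ w := by
  have hdrift (i : ℕ) (hi : i ≤ n) :
      Nat.count (prefAt σ · = true) i ≤ Nat.count (prefAt σ · = false) i + h ∧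
        Nat.count (prefAt σ · = false) i ≤ Nat.count (prefAt σ · = true) i + h := by
    have := count_le_count_add_drift (σ := σ) hi
    omega
  have hS : Nat.count (IsSpare (prefAt σ) K) n ≤ n - 2 * K := by
    have := count_true_add_count_false (prefAt σ) n
    have := hdrift n le_rfl
    rw [count_isSpare]
    omega
  let f : Fin n → Fin n := fun x => ⟨benchSeat (prefAt σ) K n x, benchSeat_lt h3K hS x.2⟩
  have hf : Function.Injective f := fun x y hxy =>
    Fin.ext (benchSeat_injOn h3K hS x.2 y.2 (congrArg Fin.val hxy))
  let e := Equiv.ofBijective f (Finite.injective_iff_bijective.mp hf)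
  let c : Fin K → Fin n := fun p => e.symm ⟨3 * p + 1, by omega⟩
  refine exists_seating_of_benches e c (e.symm.injective.comp fun p q hpq => ?_) fun p => ?_
  · ext
    simpa using hpq
  have hseat : benchSeat (prefAt σ) K n (c p) = 3 * p + 1 :=
    congrArg Fin.val (e.apply_symm_apply _)
  obtain ⟨a, hax, b, hbx, ha, hb, hseat_a, hseat_b⟩ :=
    exists_earlier_benchmates hdrift h2K p.2 (c p).2 hseat
  refine ⟨⟨a, hax.trans (c p).2⟩, ⟨b, hbx.trans (c p).2⟩, ?_, ?_, hax, hbx,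
    eq_add_one_of_val_eq ?_, eq_add_one_of_val_eq ?_⟩
  · rwa [← prefAt_val (σ := σ)]
  · rwa [← prefAt_val (σ := σ)]
  · change benchSeat _ _ _ _ = benchSeat _ _ _ _ + 1
    rw [hseat, hseat_a]
  · change benchSeat _ _ _ _ = benchSeat _ _ _ _ + 1
    rw [hseat, hseat_b]

/-- With `q = ⌊n/3⌋` and `h = max(h(σ), h(-σ))`, we have
`ν_max(σ) ≥ min{q, ⌊(n-h)/2⌋}`; i.e. some seating order produces at least that many
napkinless diners. -/
theorem statement8 (n : ℕ) (hn : 1 ≤ n) (q : ℕ) (hq : q = n / 3)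
    (σ : Fin n → Bool) (h : ℕ) (hmax : h = max (drift σ) (drift fun j => !σ j)) :
    min q ((n - h) / 2) ≤ nuMax σ ∧
    ∃ w : Equiv.Perm (Fin n), IsSeating w ∧ min q ((n - h) / 2) ≤ nu σ w := by
  have : NeZero n := ⟨by omega⟩
  obtain ⟨w, hw, hK⟩ := exists_seating_of_drift_le (K := min q ((n - h) / 2)) (by omega)
    (by omega) (hmax ▸ le_max_left _ _) (hmax ▸ le_max_right _ _)
  exact ⟨hK.trans (Finset.le_sup (by simpa using hw)), w, hw, hK⟩

end Napkin
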